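/- Let F̄ ⊆ K̄ be finite fields with [K̄:F̄] = m and Gal(K̄/F̄) = ⟨σ̄⟩, and let d̄ ∈ K̄^×. If 1, d̄, d̄², ..., d̄^{m−1} are linearly dependent over F̄ (in particular this always holds when F̄ = 𝔽₂, K̄ = 𝔽₁₆, m = 4), then the polynomial t^m − d̄ is reducible in K̄[t;σ̄] and the nonassociative cyclic algebra (K̄/F̄, σ̄, d̄) = K̄[t;σ̄]/K̄[t;σ̄](t^m − d̄) has zero divisors. -/

import Mathlib

/-! Let `L = F(d)`. Dependence of `1, d, …, d^{m-1}` means `s = [L:F] < m`, so `r = [K:L] ≥ 2`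
and `σ^s` generates `Gal(K/L)`. The norm of finite fields is surjective, so
`d = N_{K/L}(c) = ∏_{j<r} σ^{sj}(c)` for some `c`, and then
`t^m - d = (∑_{i<r} w_{i+1} t^{si}) (t^s - c)` with `w_i = ∏_{i≤j<r} σ^{sj}(c)`.
Both factors are nonzero of degree `< m`, and their product `t^m - d` has remainder `0`. -/

/-- An abstract presentation of the skew polynomial ring `S[t;σ,δ]`:
a ring `R` together with an embedding of `S`, a variable `t` satisfying the
commutation rule `t·a = σ(a)·t + δ(a)`, such that the `t^i` form a basis of `R`
as a left `S`-module (encoded by the coefficient equivalence). -/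
structure SkewPolyRing (S : Type*) (R : Type*) [Ring S] [Ring R]
    (σ : S →+* S) (δ : S →+ S) : Type _ where
  ι : S →+* R
  t : R
  t_comm : ∀ a : S, t * ι a = ι (σ a) * t + ι (δ a)
  coeff : R ≃+ (ℕ →₀ S)
  coeff_symm : ∀ p : ℕ →₀ S, coeff.symm p = p.sum fun i a => ι a * t ^ i

namespace SkewPolyRing

variable {S R : Type*} [Ring S] [Ring R] {σ : S →+* S} {δ : S →+ S}

/-- `g` has degree `< m`. -/
def degLT (P : SkewPolyRing S R σ δ) (g : R) (m : ℕ) : Prop :=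
  ∀ i, m ≤ i → P.coeff g i = 0

/-- The degree of a skew polynomial (with `deg 0 = 0` by convention). -/
noncomputable def deg (P : SkewPolyRing S R σ δ) (g : R) : ℕ :=
  (P.coeff g).support.sup id

/-- `f` is monic of degree `m`. -/
def MonicDeg (P : SkewPolyRing S R σ δ) (f : R) (m : ℕ) : Prop :=
  P.coeff f m = 1 ∧ ∀ i, m < i → P.coeff f i = 0

/-- `modr` computes a remainder of right division by `f`. -/
def IsModr (P : SkewPolyRing S R σ δ) (f : R) (m : ℕ) (modr : R → R) : Prop :=
  ∀ g : R, P.degLT (modr g) m ∧ ∃ q : R, g = q * f + modr g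

end SkewPolyRing

namespace SkewPolyRing

open Finset Finsupp

section Ring

variable {S R : Type*} [Ring S] [Ring R] {σ : S →+* S} (P : SkewPolyRing S R σ 0)

theorem t_mul_ι (a : S) : P.t * P.ι a = P.ι (σ a) * P.t := by
  simpa using P.t_comm a

theorem t_pow_mul_ι (n : ℕ) (a : S) : P.t ^ n * P.ι a = P.ι ((σ ^ n) a) * P.t ^ n := by
  induction n generalizing a with
  | zero => simp
  | succ n ih =>
    rw [pow_succ, mul_assoc, t_mul_ι, ← mul_assoc, ih, mul_assoc, ← pow_succ, pow_succ σ]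
    rfl

theorem coeff_symm_single (i : ℕ) (a : S) :
    P.coeff.symm (single i a) = P.ι a * P.t ^ i := by
  rw [P.coeff_symm, sum_single_index (by simp)]

theorem coeff_ι_mul_t_pow (i : ℕ) (a : S) : P.coeff (P.ι a * P.t ^ i) = single i a := by
  rw [← coeff_symm_single, AddEquiv.apply_symm_apply]

theorem induction_on_coeff {p : R → Prop} (e : R) (zero : p 0)
    (add : ∀ a b, p a → p b → p (a + b)) (monomial : ∀ i a, p (P.ι a * P.t ^ i)) :
    p e := by
  rw [← P.coeff.symm_apply_apply e]
  induction P.coeff e using Finsupp.induction_linear with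
  | zero => simpa using zero
  | add f g hf hg => simpa using add _ _ hf hg
  | single i a => simpa [coeff_symm_single] using monomial i a

theorem coeff_mul_ι (e : R) (a : S) (i : ℕ) :
    P.coeff (e * P.ι a) i = P.coeff e i * (σ ^ i) a := by
  induction e using P.induction_on_coeff with
  | zero => simp
  | add e₁ e₂ h₁ h₂ => simp [add_mul, h₁, h₂]
  | monomial j b =>
    rw [mul_assoc, t_pow_mul_ι, ← mul_assoc, ← map_mul, coeff_ι_mul_t_pow, coeff_ι_mul_t_pow]
    rcases eq_or_ne j i with rfl | hji
    · simp
    · simp [single_eq_of_ne' hji]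

theorem coeff_mul_t_pow_add (e : R) (m i : ℕ) :
    P.coeff (e * P.t ^ m) (i + m) = P.coeff e i := by
  induction e using P.induction_on_coeff with
  | zero => simp
  | add e₁ e₂ h₁ h₂ => simp [add_mul, h₁, h₂]
  | monomial j b =>
    rw [mul_assoc, ← pow_add, coeff_ι_mul_t_pow, coeff_ι_mul_t_pow]
    rcases eq_or_ne j i with rfl | hji
    · simp
    · rw [single_eq_of_ne' hji, single_eq_of_ne' (by omega : j + m ≠ i + m)]

theorem coeff_t_pow (i : ℕ) : P.coeff (P.t ^ i) = single i 1 := by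
  simpa using P.coeff_ι_mul_t_pow i 1

theorem coeff_ι (a : S) : P.coeff (P.ι a) = single 0 a := by
  simpa using P.coeff_ι_mul_t_pow 0 a

theorem t_pow_sub_ι_ne_zero [Nontrivial S] {m : ℕ} (hm : m ≠ 0) (d : S) :
    P.t ^ m - P.ι d ≠ 0 := fun h => by
  simpa [coeff_t_pow, coeff_ι, single_eq_of_ne hm] using congrArg (P.coeff · m) h

/-- Right multiplication by `t^m - d` raises the top degree by exactly `m`. -/
theorem eq_zero_of_degLT_mul_t_pow_sub_ι {m : ℕ} (hm : 0 < m) {e : R} (d : S)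
    (h : P.degLT (e * (P.t ^ m - P.ι d)) m) : e = 0 := by
  by_contra he
  have hsupp : (P.coeff e).support.Nonempty := by
    simpa [Finsupp.support_nonempty_iff] using he
  set k := (P.coeff e).support.max' hsupp
  have hk : P.coeff e k ≠ 0 := Finsupp.mem_support_iff.mp (max'_mem _ _)
  have hkm : P.coeff e (k + m) = 0 :=
    Finsupp.notMem_support_iff.mp fun hmem => by
      have := le_max' _ _ hmem
      omega
  have htop : P.coeff (e * (P.t ^ m - P.ι d)) (k + m) = P.coeff e k := by
    rw [mul_sub, map_sub, Finsupp.sub_apply, coeff_mul_t_pow_add, coeff_mul_ι, hkm, zero_mul,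
      sub_zero]
  exact hk (htop ▸ h (k + m) (by omega))

theorem modr_t_pow_sub_ι_eq_zero {m : ℕ} (hm : 0 < m) {d : S} {modr : R → R}
    (hmodr : P.IsModr (P.t ^ m - P.ι d) m modr) : modr (P.t ^ m - P.ι d) = 0 := by
  obtain ⟨hdeg, q, hq⟩ := hmodr (P.t ^ m - P.ι d)
  have hrem : modr (P.t ^ m - P.ι d) = (1 - q) * (P.t ^ m - P.ι d) := by
    rw [sub_mul, one_mul]
    exact eq_sub_of_add_eq' hq.symm
  rw [hrem] at hdeg ⊢
  rw [P.eq_zero_of_degLT_mul_t_pow_sub_ι hm d hdeg, zero_mul]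

theorem degLT_ι_mul_t_pow {i m : ℕ} (h : i < m) (a : S) : P.degLT (P.ι a * P.t ^ i) m :=
  fun j hj => by rw [coeff_ι_mul_t_pow, single_eq_of_ne (by omega)]

variable {P} in
theorem degLT.sub {g h : R} {m : ℕ} (hg : P.degLT g m) (hh : P.degLT h m) :
    P.degLT (g - h) m :=
  fun i hi => by rw [map_sub, Finsupp.sub_apply, hg i hi, hh i hi, sub_zero]

theorem degLT_sum {ι : Type*} {s : Finset ι} {g : ι → R} {m : ℕ}
    (h : ∀ i ∈ s, P.degLT (g i) m) : P.degLT (∑ i ∈ s, g i) m :=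
  fun j hj => by
    rw [map_sum, Finsupp.finsetSum_apply]
    exact sum_eq_zero fun i hi => h i hi j hj

end Ring

section CommRing

variable {S R : Type*} [CommRing S] [Ring R] {σ : S →+* S} (P : SkewPolyRing S R σ 0)

/-- With `w i = ∏_{i≤j<r} σ^{sj}(c)`, the summands telescope:
`(w (i+1) t^{si}) (t^s - c) = w (i+1) t^{s(i+1)} - w i t^{si}`. -/
theorem sum_mul_t_pow_sub_ι (c : S) (s r : ℕ) :
    (∑ i ∈ range r, P.ι (∏ j ∈ Ico (i + 1) r, (σ ^ (s * j)) c) * P.t ^ (s * i)) *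
        (P.t ^ s - P.ι c) =
      P.t ^ (s * r) - P.ι (∏ j ∈ range r, (σ ^ (s * j)) c) := by
  set w : ℕ → S := fun i => ∏ j ∈ Ico i r, (σ ^ (s * j)) c
  have hterm : ∀ i ∈ range r, P.ι (w (i + 1)) * P.t ^ (s * i) * (P.t ^ s - P.ι c) =
      P.ι (w (i + 1)) * P.t ^ (s * (i + 1)) - P.ι (w i) * P.t ^ (s * i) := fun i hi => by
    have hw : w (i + 1) * (σ ^ (s * i)) c = w i := by
      rw [mul_comm]
      exact (prod_eq_prod_Ico_succ_bot (mem_range.mp hi) fun j => (σ ^ (s * j)) c).symm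
    rw [mul_sub, mul_assoc, ← pow_add, mul_add, mul_one, mul_assoc, t_pow_mul_ι, ← mul_assoc,
      ← map_mul, hw]
  rw [Finset.sum_mul, sum_congr rfl hterm, sum_range_sub (fun i => P.ι (w i) * P.t ^ (s * i))]
  simp only [w, Ico_self, prod_empty, map_one, one_mul, mul_zero, pow_zero, mul_one,
    ← Finset.range_eq_Ico]

theorem exists_degLT_mul_eq_t_pow_sub_ι_prod (c : S) {s r : ℕ} (hs : 0 < s) (hr : 1 < r) :
    ∃ g h : R, P.degLT g (s * r) ∧ P.degLT h (s * r) ∧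
      P.t ^ (s * r) - P.ι (∏ j ∈ range r, (σ ^ (s * j)) c) = g * h := by
  refine ⟨_, _, P.degLT_sum fun i hi => P.degLT_ι_mul_t_pow ?_ _, ?_,
    (P.sum_mul_t_pow_sub_ι c s r).symm⟩
  · exact Nat.mul_lt_mul_of_pos_left (mem_range.mp hi) hs
  · have hsr : s < s * r := lt_mul_right hs hr
    have ht : P.degLT (P.t ^ s) (s * r) := by simpa using P.degLT_ι_mul_t_pow hsr 1
    exact ht.sub (by simpa using P.degLT_ι_mul_t_pow (hs.trans hsr) c)

end CommRing

end SkewPolyRing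

theorem minpoly.natDegree_lt_of_not_linearIndependent {F A : Type*} [Field F] [Ring A]
    [Algebra F A] {x : A} {m : ℕ}
    (h : ¬ LinearIndependent F fun i : Fin m => x ^ (i : ℕ)) :
    (minpoly F x).natDegree < m := by
  by_contra! hle
  exact h ((linearIndependent_pow x).comp (Fin.castLE hle) (Fin.castLE_injective hle))

theorem IntermediateField.pow_finrank_apply_of_mem {F K : Type*} [Field F] [Field K]
    [Algebra F K] [IsGalois F K] [IsMulCommutative Gal(K/F)] (L : IntermediateField F K)
    (g : Gal(K/F)) {x : K} (hx : x ∈ L) : (g ^ Module.finrank F L) x = x := by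
  rw [L.finrank_eq_fixingSubgroup_index]
  exact L.fixingSubgroup.pow_index_mem g ⟨x, hx⟩

theorem FiniteField.exists_prod_pow_apply_eq {F K : Type*} [Field F] [Field K] [Finite K]
    [Algebra F K] (τ : Gal(K/F)) {d : K} (hd : τ d = d) :
    ∃ c : K, ∏ j ∈ Finset.range (orderOf τ), (τ ^ j) c = d := by
  classical
  set E := IntermediateField.fixedField (Subgroup.zpowers τ)
  have hdE : d ∈ E := fun g =>
    (Subgroup.zpowers_le.mpr (show τ ∈ MulAction.stabilizer Gal(K/F) d from hd)) g.2
  obtain ⟨c, hc⟩ := FiniteField.norm_surjective E K ⟨d, hdE⟩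
  refine ⟨c, ?_⟩
  have hnorm := Algebra.norm_eq_prod_automorphisms E c
  rw [hc] at hnorm
  calc ∏ j ∈ Finset.range (orderOf τ), (τ ^ j) c
      = ∏ j : Fin (orderOf τ), (τ ^ (j : ℕ)) c := (Fin.prod_univ_eq_prod_range _ _).symm
    _ = ∏ g : Subgroup.zpowers τ, (g : Gal(K/F)) c :=
        Fintype.prod_equiv (finEquivZPowers (isOfFinOrder_of_finite τ)) _ _ fun _ => rfl
    _ = ∏ g : E.fixingSubgroup, (g : Gal(K/F)) c :=
        (Fintype.prod_equiv
          (MulEquiv.subgroupCongr (IntermediateField.fixingSubgroup_fixedField _)).toEquiv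
          _ _ fun _ => rfl).symm
    _ = ∏ g : Gal(K/E), g c :=
        Fintype.prod_equiv (IntermediateField.fixingSubgroupEquiv E).toEquiv _ _ fun _ => rfl
    _ = d := hnorm.symm

theorem exists_prod_pow_mul_apply_eq_of_not_linearIndependent {F K : Type*} [Field F]
    [Field K] [Finite K] [Algebra F K] {σ : Gal(K/F)}
    (hgen : ∀ τ : Gal(K/F), τ ∈ Subgroup.zpowers σ)
    {d : K} (hdep : ¬ LinearIndependent F fun i : Fin (Module.finrank F K) => d ^ (i : ℕ)) :
    ∃ s r : ℕ, ∃ c : K, 0 < s ∧ 1 < r ∧ s * r = Module.finrank F K ∧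
      ∏ j ∈ Finset.range r, (σ ^ (s * j)) c = d := by
  set L := IntermediateField.adjoin F {d}
  set s := Module.finrank F L
  have hs0 : 0 < s := Module.finrank_pos
  have hsm : s < Module.finrank F K := by
    rw [show s = (minpoly F d).natDegree from
      IntermediateField.adjoin.finrank (IsIntegral.of_finite F d)]
    exact minpoly.natDegree_lt_of_not_linearIndependent hdep
  have hsdvd : s ∣ Module.finrank F K := Dvd.intro _ (Module.finrank_mul_finrank F L K)
  have hσ : orderOf σ = Module.finrank F K := by
    rw [orderOf_eq_card_of_forall_mem_zpowers hgen, IsGalois.card_aut_eq_finrank]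
  have hsr : s * orderOf (σ ^ s) = Module.finrank F K := by
    rw [orderOf_pow_of_dvd hs0.ne' (hσ ▸ hsdvd), hσ, Nat.mul_div_cancel' hsdvd]
  have hr : 1 < orderOf (σ ^ s) := by
    by_contra! hr
    nlinarith
  obtain ⟨c, hc⟩ := FiniteField.exists_prod_pow_apply_eq (σ ^ s)
    (L.pow_finrank_apply_of_mem σ (IntermediateField.mem_adjoin_simple_self F d))
  exact ⟨s, _, c, hs0, hr, hsr, by simpa only [pow_mul] using hc⟩

theorem cyclic_algebra_with_zero_divisors_general {F K R : Type*} [Field F] [Field K]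
    [Fintype K] [Algebra F K] [Ring R]
    (m : ℕ) (hdeg : Module.finrank F K = m)
    (σ : K ≃ₐ[F] K) (hgen : ∀ τ : K ≃ₐ[F] K, τ ∈ Subgroup.zpowers σ)
    (σr : K →+* K) (hσr : ∀ x : K, σr x = σ x)
    (d : K)
    (hdep : ¬ LinearIndependent F (fun i : Fin m => d ^ (i : ℕ)))
    (P : SkewPolyRing K R σr 0) (f : R)
    (hf : f = P.coeff.symm (Finsupp.single m 1 - Finsupp.single 0 d))
    (modr : R → R) (hmodr : P.IsModr f m modr) :
    -- `t^m − d̄` is reducible in `K̄[t;σ̄]`: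
    (∃ g h : R, P.degLT g m ∧ P.degLT h m ∧ f = g * h) ∧
    -- the nonassociative cyclic algebra `(K̄/F̄, σ̄, d̄)` has zero divisors:
    (∃ a b : R, P.degLT a m ∧ P.degLT b m ∧ a ≠ 0 ∧ b ≠ 0 ∧ modr (a * b) = 0) := by
  subst hdeg
  obtain ⟨s, r, c, hs, hr, hsr, hc⟩ :=
    exists_prod_pow_mul_apply_eq_of_not_linearIndependent hgen hdep
  have hσr_pow : ∀ n, ⇑(σr ^ n) = ⇑(σ ^ n) := fun n => by
    rw [RingHom.coe_pow, AlgEquiv.coe_pow, funext hσr]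
  have hfd : f = P.t ^ Module.finrank F K - P.ι d := by
    rw [hf, map_sub, P.coeff_symm_single, P.coeff_symm_single, map_one, one_mul, pow_zero,
      mul_one]
  have hf0 : f ≠ 0 := hfd ▸ P.t_pow_sub_ι_ne_zero Module.finrank_pos.ne' d
  obtain ⟨g, h, hg, hh, hgh⟩ := P.exists_degLT_mul_eq_t_pow_sub_ι_prod c hs hr
  simp only [hσr_pow, hc, hsr, ← hfd] at hg hh hgh
  refine ⟨⟨g, h, hg, hh, hgh⟩, g, h, hg, hh, left_ne_zero_of_mul (hgh ▸ hf0),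
    right_ne_zero_of_mul (hgh ▸ hf0), ?_⟩
  rw [← hgh, hfd]
  exact P.modr_t_pow_sub_ι_eq_zero Module.finrank_pos (hfd ▸ hmodr)

/-- Let `F̄ ⊆ K̄` be finite fields with `[K̄:F̄] = m` and `Gal(K̄/F̄) = ⟨σ̄⟩`, and let
`d̄ ∈ K̄^×`.  If `1, d̄, d̄², …, d̄^{m−1}` are linearly dependent over `F̄` (as always
happens e.g. for `F̄ = 𝔽₂`, `K̄ = 𝔽₁₆`, `m = 4`), then `t^m − d̄` is reducible in
`K̄[t;σ̄]` and the nonassociative cyclic algebra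
`(K̄/F̄, σ̄, d̄) = K̄[t;σ̄]/K̄[t;σ̄](t^m − d̄)` has zero divisors. -/
theorem cyclic_algebra_with_zero_divisors {F K R : Type*} [Field F] [Field K]
    [Fintype F] [Fintype K] [Algebra F K] [Ring R]
    (m : ℕ) (hdeg : Module.finrank F K = m)
    (σ : K ≃ₐ[F] K) (hgen : ∀ τ : K ≃ₐ[F] K, τ ∈ Subgroup.zpowers σ)
    (σr : K →+* K) (hσr : ∀ x : K, σr x = σ x)
    (d : K) (hd : d ≠ 0)
    (hdep : ¬ LinearIndependent F (fun i : Fin m => d ^ (i : ℕ)))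
    (P : SkewPolyRing K R σr 0) (f : R)
    (hf : f = P.coeff.symm (Finsupp.single m 1 - Finsupp.single 0 d))
    (modr : R → R) (hmodr : P.IsModr f m modr) :
    -- `t^m − d̄` is reducible in `K̄[t;σ̄]`:
    (∃ g h : R, P.degLT g m ∧ P.degLT h m ∧ f = g * h) ∧
    -- the nonassociative cyclic algebra `(K̄/F̄, σ̄, d̄)` has zero divisors:
    (∃ a b : R, P.degLT a m ∧ P.degLT b m ∧ a ≠ 0 ∧ b ≠ 0 ∧ modr (a * b) = 0) :=
  cyclic_algebra_with_zero_divisors_general m hdeg σ hgen σr hσr d hdep P f hf modr hmodr
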